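/- For d > 2, let S = Σ_{i,j=1}^{d} E_{ij} ⊗ E_{ji}, F₀ = (I_{d²} − S)/√(2d(d−1)), and define the linear map φ_λ : M_{d²}(ℂ) → M_{d²}(ℂ) by φ_λ(a) = λ (tr(a) I_{d²} − F₀ a F₀) − F₀ a F₀, regarding the domain as M_d(ℂ) ⊗ M_d(ℂ). If 1/(d(d−1)−1) ≤ λ < 2/(d(d−1)−2), then φ_λ(p ⊗ q) is positive semidefinite for all rank-one orthogonal projections p, q ∈ M_d(ℂ) (hence φ_λ(σ) is positive semidefinite for every separable positive semidefinite σ ∈ M_d(ℂ) ⊗ M_d(ℂ)), yet φ_λ is not a positive map: there exists a positive semidefinite a ∈ M_{d²}(ℂ) such that φ_λ(a) is not positive semidefinite. -/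

import Mathlib

/-!
For a vector `w`, `φ_λ(w w*) = λ‖w‖² I − (λ + 1) (F₀ w)(F₀ w)*`, and by Cauchy–Schwarz a matrix
`α I − β v v*` with `β ≥ 0` is positive semidefinite when `β‖v‖² ≤ α`, while it has a negative
value at `v` when `α < β‖v‖²`. Since `F₀ w` is a multiple of `w − S w`, everything reduces to
computing `‖w − S w‖²`. For a product vector `w = u ⊗ v` it is `2‖w‖² − 2|⟨u, v⟩|² ≤ 2‖w‖²`, so
the lower bound on `λ` makes `φ_λ` positive on all `u u* ⊗ v v*`, hence, decomposing positive
semidefinite matrices into rank-one terms, on all `p ⊗ q`. For an antisymmetric `w`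
(`S w = −w`) it is `4‖w‖²`, and the upper bound on `λ` makes `φ_λ(w w*)` fail to be positive
semidefinite.
-/

open scoped Kronecker ComplexOrder
open Matrix

/-- `p` is a rank-one orthogonal projection. -/
def IsRankOneProj {m : Type*} [Fintype m] [DecidableEq m]
    (p : Matrix m m ℂ) : Prop :=
  p.IsHermitian ∧ p * p = p ∧ p.trace = 1

/-- The swap operator `S = ∑ i j, E_{ij} ⊗ E_{ji}` on `ℂ^d ⊗ ℂ^d`. -/
noncomputable def swapMatrix (d : ℕ) :
    Matrix (Fin d × Fin d) (Fin d × Fin d) ℂ :=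
  ∑ i : Fin d, ∑ j : Fin d,
    Matrix.single i j (1 : ℂ) ⊗ₖ Matrix.single j i (1 : ℂ)

/-- `F₀ = (I − S) / √(2d(d−1))`. -/
noncomputable def F0 (d : ℕ) : Matrix (Fin d × Fin d) (Fin d × Fin d) ℂ :=
  (((Real.sqrt (2 * d * (d - 1)))⁻¹ : ℝ) : ℂ) • (1 - swapMatrix d)

/-- A matrix on `ℂ^d ⊗ ℂ^d` is separable if it is a finite sum of Kronecker products
of positive semidefinite matrices. -/
def SeparablePair {d : ℕ}
    (σ : Matrix (Fin d × Fin d) (Fin d × Fin d) ℂ) : Prop :=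
  ∃ (m : ℕ) (σ₁ σ₂ : Fin m → Matrix (Fin d) (Fin d) ℂ),
    (∀ t, (σ₁ t).PosSemidef) ∧ (∀ t, (σ₂ t).PosSemidef) ∧
    σ = ∑ t, σ₁ t ⊗ₖ σ₂ t

open WithLp

section RankOne

variable {𝕜 n : Type*} [RCLike 𝕜] [Fintype n]

lemma star_dotProduct_self_eq_norm_sq (x : n → 𝕜) : star x ⬝ᵥ x = (‖toLp 2 x‖ ^ 2 : ℝ) := by
  rw [dotProduct_comm, ← EuclideanSpace.inner_toLp_toLp, inner_self_eq_norm_sq_to_K]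
  simp

lemma trace_vecMulVec_star (w : n → 𝕜) :
    (vecMulVec w (star w)).trace = (‖toLp 2 w‖ ^ 2 : ℝ) := by
  rw [trace_vecMulVec, dotProduct_comm, star_dotProduct_self_eq_norm_sq]

lemma mul_vecMulVec_star_mul_conjTranspose (A : Matrix n n 𝕜) (w : n → 𝕜) :
    A * vecMulVec w (star w) * Aᴴ = vecMulVec (A *ᵥ w) (star (A *ᵥ w)) := by
  rw [mul_vecMulVec, vecMulVec_mul, star_mulVec]

variable [DecidableEq n]

lemma star_dotProduct_smul_one_sub_smul_vecMulVec_mulVec (α β : ℝ) (v x : n → 𝕜) :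
    star x ⬝ᵥ ((α • 1 - β • vecMulVec v (star v) : Matrix n n 𝕜) *ᵥ x) =
      ((α * ‖toLp 2 x‖ ^ 2 - β * ‖inner 𝕜 (toLp 2 v) (toLp 2 x)‖ ^ 2 : ℝ) : 𝕜) := by
  have hvx : (star x ⬝ᵥ v) * (star v ⬝ᵥ x) = (‖inner 𝕜 (toLp 2 v) (toLp 2 x)‖ ^ 2 : ℝ) := by
    rw [RCLike.ofReal_pow, ← RCLike.mul_conj, EuclideanSpace.inner_toLp_toLp, dotProduct_comm x,
      star_dotProduct, RCLike.star_def, mul_comm]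
  simp only [sub_mulVec, smul_mulVec, one_mulVec, vecMulVec_mulVec, dotProduct_sub,
    dotProduct_smul, star_dotProduct_self_eq_norm_sq, MulOpposite.smul_eq_mul_unop,
    MulOpposite.unop_op, hvx]
  push_cast
  simp only [RCLike.real_smul_eq_coe_mul]

lemma isHermitian_smul_one_sub_smul_vecMulVec (α β : ℝ) (v : n → 𝕜) :
    (α • 1 - β • vecMulVec v (star v) : Matrix n n 𝕜).IsHermitian :=
  (isHermitian_one.smul (IsSelfAdjoint.all α)).sub
    ((posSemidef_vecMulVec_self_star v).isHermitian.smul (IsSelfAdjoint.all β))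

lemma posSemidef_smul_one_sub_smul_vecMulVec {α β : ℝ} (hβ : 0 ≤ β) {v : n → 𝕜}
    (h : β * ‖toLp 2 v‖ ^ 2 ≤ α) :
    (α • 1 - β • vecMulVec v (star v) : Matrix n n 𝕜).PosSemidef := by
  refine .of_dotProduct_mulVec_nonneg (isHermitian_smul_one_sub_smul_vecMulVec α β v) fun x => ?_
  rw [star_dotProduct_smul_one_sub_smul_vecMulVec_mulVec, RCLike.ofReal_nonneg]
  have hcs : ‖inner 𝕜 (toLp 2 v) (toLp 2 x)‖ ^ 2 ≤ ‖toLp 2 v‖ ^ 2 * ‖toLp 2 x‖ ^ 2 := by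
    rw [← mul_pow]
    exact pow_le_pow_left₀ (norm_nonneg _) (norm_inner_le_norm _ _) 2
  nlinarith [mul_le_mul_of_nonneg_left hcs hβ, mul_le_mul_of_nonneg_right h (sq_nonneg ‖toLp 2 x‖)]

lemma not_posSemidef_smul_one_sub_smul_vecMulVec {α β : ℝ} {v : n → 𝕜} (hv : v ≠ 0)
    (h : α < β * ‖toLp 2 v‖ ^ 2) :
    ¬(α • 1 - β • vecMulVec v (star v) : Matrix n n 𝕜).PosSemidef := fun hpsd => by
  have hform := hpsd.dotProduct_mulVec_nonneg v
  rw [star_dotProduct_smul_one_sub_smul_vecMulVec_mulVec, RCLike.ofReal_nonneg,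
    inner_self_eq_norm_sq_to_K, ← RCLike.ofReal_pow, RCLike.norm_ofReal,
    abs_of_nonneg (by positivity)] at hform
  have hv' : toLp 2 v ≠ 0 := by simpa using hv
  have hpos : 0 < ‖toLp 2 v‖ ^ 2 := by positivity
  nlinarith

end RankOne

section Kronecker

variable {α l m n o : Type*}

lemma sum_kronecker_sum [NonUnitalNonAssocSemiring α] {ι κ : Type*} (s : Finset ι) (t : Finset κ)
    (A : ι → Matrix l m α) (B : κ → Matrix n o α) :
    (∑ i ∈ s, A i) ⊗ₖ (∑ j ∈ t, B j) = ∑ i ∈ s, ∑ j ∈ t, A i ⊗ₖ B j := by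
  ext x y
  simp only [kroneckerMap_apply, Matrix.sum_apply, Finset.sum_mul_sum]

lemma vecMulVec_kronecker_vecMulVec [CommSemiring α] (a b : m → α) (c e : n → α) :
    vecMulVec a b ⊗ₖ vecMulVec c e =
      vecMulVec (fun x => a x.1 * c x.2) (fun y => b y.1 * e y.2) := by
  ext x y
  simp only [kroneckerMap_apply, vecMulVec_apply]
  ring

lemma star_vecMulVec_kronecker_star_vecMulVec [CommSemiring α] [StarRing α] (u : m → α)
    (v : n → α) :
    vecMulVec u (star u) ⊗ₖ vecMulVec v (star v) =
      vecMulVec (fun x => u x.1 * v x.2) (star fun x => u x.1 * v x.2) := by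
  rw [vecMulVec_kronecker_vecMulVec]
  congr
  ext y
  simp

lemma posSemidef_map_kronecker {𝕜 k : Type*} [RCLike 𝕜] [Fintype m] [Fintype n] [Fintype k]
    (φ : Matrix (m × n) (m × n) 𝕜 →ₗ[𝕜] Matrix k k 𝕜)
    (hφ : ∀ u v, (φ (vecMulVec u (star u) ⊗ₖ vecMulVec v (star v))).PosSemidef)
    {p : Matrix m m 𝕜} {q : Matrix n n 𝕜} (hp : p.PosSemidef) (hq : q.PosSemidef) :
    (φ (p ⊗ₖ q)).PosSemidef := by
  obtain ⟨_, u, rfl⟩ := posSemidef_iff_eq_sum_vecMulVec.mp hp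
  obtain ⟨_, v, rfl⟩ := posSemidef_iff_eq_sum_vecMulVec.mp hq
  rw [sum_kronecker_sum, map_sum]
  exact posSemidef_sum _ fun i _ => map_sum φ _ _ ▸ posSemidef_sum _ fun j _ => hφ (u i) (v j)

end Kronecker

lemma exists_comp_swap_eq_neg {R m : Type*} [Ring R] [Nontrivial R] [DecidableEq m]
    [Nontrivial m] : ∃ w : m × m → R, w ≠ 0 ∧ w ∘ Prod.swap = -w := by
  obtain ⟨i, j, hij⟩ := exists_pair_ne m
  refine ⟨Pi.single (i, j) 1 - Pi.single (j, i) 1, fun h => ?_, ?_⟩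
  · simpa [hij] using congrFun h (i, j)
  · ext x
    simp only [Function.comp_apply, Pi.sub_apply, Pi.neg_apply, Pi.single_apply,
      Prod.swap_eq_iff_eq_swap, Prod.swap_prod_mk, neg_sub]

section Swap

variable {𝕜 m : Type*} [RCLike 𝕜] [Fintype m]

lemma norm_toLp_comp_swap (w : m × m → 𝕜) : ‖toLp 2 (w ∘ Prod.swap)‖ = ‖toLp 2 w‖ := by
  simp only [EuclideanSpace.norm_eq, Function.comp_apply]
  congr 1
  exact Fintype.sum_equiv (Equiv.prodComm m m) _ _ fun _ => rfl

lemma inner_toLp_product_comp_swap (u v : m → 𝕜) :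
    inner 𝕜 (toLp 2 fun x : m × m => u x.1 * v x.2) (toLp 2 ((fun x => u x.1 * v x.2) ∘ Prod.swap)) =
      (‖star u ⬝ᵥ v‖ ^ 2 : ℝ) := by
  rw [EuclideanSpace.inner_toLp_toLp, RCLike.ofReal_pow, ← RCLike.mul_conj, RCLike.star_def.symm]
  simp only [dotProduct, Fintype.sum_prod_type, Function.comp_apply, Prod.fst_swap, Prod.snd_swap,
    Pi.star_apply, star_sum, star_mul', star_star, Finset.sum_mul_sum]
  exact Fintype.sum_congr _ _ fun i => Fintype.sum_congr _ _ fun j => by ring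

lemma norm_sub_comp_swap_sq_le (u v : m → 𝕜) :
    ‖toLp 2 ((fun x => u x.1 * v x.2) - (fun x => u x.1 * v x.2) ∘ Prod.swap)‖ ^ 2 ≤
      2 * ‖toLp 2 (fun x : m × m => u x.1 * v x.2)‖ ^ 2 := by
  rw [toLp_sub, @norm_sub_sq 𝕜, norm_toLp_comp_swap, inner_toLp_product_comp_swap, RCLike.ofReal_re]
  nlinarith [sq_nonneg ‖star u ⬝ᵥ v‖]

end Swap

lemma IsRankOneProj.posSemidef {m : Type*} [Fintype m] [DecidableEq m] {p : Matrix m m ℂ}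
    (hp : IsRankOneProj p) : p.PosSemidef := by
  simpa only [hp.1.eq, hp.2.1] using posSemidef_conjTranspose_mul_self p

lemma swapMatrix_apply (d : ℕ) (x y : Fin d × Fin d) :
    swapMatrix d x y = if x.swap = y then 1 else 0 := by
  obtain ⟨a, b⟩ := x
  obtain ⟨c, e⟩ := y
  simp [swapMatrix, Matrix.sum_apply, single_apply, ite_and]
  simp only [eq_comm (a := e), ← ite_and, and_comm]

lemma swapMatrix_mulVec (d : ℕ) (w : Fin d × Fin d → ℂ) :
    swapMatrix d *ᵥ w = w ∘ Prod.swap := by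
  ext x
  simp [mulVec, dotProduct, swapMatrix_apply]

lemma isHermitian_swapMatrix (d : ℕ) : (swapMatrix d).IsHermitian := by
  ext x y
  simp only [conjTranspose_apply, swapMatrix_apply, Prod.swap_eq_iff_eq_swap, eq_comm (a := x)]
  simp

lemma isHermitian_F0 (d : ℕ) : (F0 d).IsHermitian :=
  (isHermitian_one.sub (isHermitian_swapMatrix d)).smul (Complex.conj_ofReal _)

lemma norm_F0_mulVec_sq (d : ℕ) (w : Fin d × Fin d → ℂ) :
    ‖toLp 2 (F0 d *ᵥ w)‖ ^ 2 = ‖toLp 2 (w - w ∘ Prod.swap)‖ ^ 2 / (2 * (d * (d - 1))) := by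
  have hD : 0 ≤ 2 * ((d : ℝ) * (d - 1)) := by
    rcases d with _ | d
    · simp
    · push_cast
      rw [add_sub_cancel_right]
      positivity
  rw [F0, smul_mulVec, sub_mulVec, one_mulVec, swapMatrix_mulVec, toLp_smul, norm_smul, mul_pow,
    Complex.norm_real, Real.norm_eq_abs, sq_abs, inv_pow, Real.sq_sqrt (by linarith), mul_assoc,
    inv_mul_eq_div]

noncomputable def phiLam (d : ℕ) (lam : ℝ) (a : Matrix (Fin d × Fin d) (Fin d × Fin d) ℂ) :
    Matrix (Fin d × Fin d) (Fin d × Fin d) ℂ :=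
  (lam : ℂ) • (a.trace • (1 : Matrix (Fin d × Fin d) (Fin d × Fin d) ℂ) - F0 d * a * F0 d)
    - F0 d * a * F0 d

lemma phiLam_vecMulVec (d : ℕ) (lam : ℝ) (w : Fin d × Fin d → ℂ) :
    phiLam d lam (vecMulVec w (star w)) =
      (lam * ‖toLp 2 w‖ ^ 2) • 1 - (lam + 1) • vecMulVec (F0 d *ᵥ w) (star (F0 d *ᵥ w)) := by
  have hF := mul_vecMulVec_star_mul_conjTranspose (F0 d) w
  rw [(isHermitian_F0 d).eq] at hF
  rw [phiLam, trace_vecMulVec_star, hF]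
  push_cast
  module

lemma posSemidef_phiLam_vecMulVec_product {d : ℕ} (hd : 2 ≤ d) {lam : ℝ}
    (hlam : 1 ≤ lam * (d * (d - 1) - 1)) (u v : Fin d → ℂ) :
    (phiLam d lam (vecMulVec (fun x => u x.1 * v x.2) (star fun x => u x.1 * v x.2))).PosSemidef := by
  have hd' : (2 : ℝ) ≤ d := by exact_mod_cast hd
  have hD : 2 ≤ (d : ℝ) * (d - 1) := by nlinarith
  have hlam0 : 0 < lam := by nlinarith
  rw [phiLam_vecMulVec]
  refine posSemidef_smul_one_sub_smul_vecMulVec (by linarith) ?_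
  rw [norm_F0_mulVec_sq, mul_div_assoc', div_le_iff₀ (by linarith)]
  nlinarith [norm_sub_comp_swap_sq_le u v, sq_nonneg ‖toLp 2 fun x : Fin d × Fin d => u x.1 * v x.2‖]

lemma not_posSemidef_phiLam_vecMulVec_of_comp_swap_eq_neg {d : ℕ} (hd : 2 ≤ d) {lam : ℝ}
    (hlam : lam * (d * (d - 1) - 2) < 2) {w : Fin d × Fin d → ℂ} (hw : w ≠ 0)
    (hswap : w ∘ Prod.swap = -w) :
    ¬(phiLam d lam (vecMulVec w (star w))).PosSemidef := by
  have hd' : (2 : ℝ) ≤ d := by exact_mod_cast hd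
  have hD : 2 ≤ (d : ℝ) * (d - 1) := by nlinarith
  have hT : 0 < ‖toLp 2 w‖ ^ 2 := by
    have hw' : toLp 2 w ≠ 0 := by simpa using hw
    positivity
  have hnorm : ‖toLp 2 (F0 d *ᵥ w)‖ ^ 2 = 2 * ‖toLp 2 w‖ ^ 2 / (d * (d - 1)) := by
    rw [norm_F0_mulVec_sq, hswap, sub_neg_eq_add, ← two_smul ℝ w, toLp_smul, norm_smul,
      Real.norm_two]
    field_simp
  have hF0w : F0 d *ᵥ w ≠ 0 := fun h => by
    rw [h, toLp_zero, norm_zero, zero_pow two_ne_zero] at hnorm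
    have : 0 < 2 * ‖toLp 2 w‖ ^ 2 / (d * (d - 1)) := by positivity
    linarith
  rw [phiLam_vecMulVec]
  refine not_posSemidef_smul_one_sub_smul_vecMulVec hF0w ?_
  rw [hnorm, mul_div_assoc', lt_div_iff₀ (by linarith)]
  nlinarith

/-- For `d > 2` and `1/(d(d−1)−1) ≤ λ < 2/(d(d−1)−2)`, the map
`φ_λ(a) = λ(tr(a) I − F₀ a F₀) − F₀ a F₀` is positive on separable elements of
`M_d(ℂ) ⊗ M_d(ℂ)` but is not a positive map. -/
theorem positive_on_separable_but_not_positive (d : ℕ) (hd : 2 < d) (lam : ℝ)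
    (hlam1 : 1 / ((d : ℝ) * ((d : ℝ) - 1) - 1) ≤ lam)
    (hlam2 : lam < 2 / ((d : ℝ) * ((d : ℝ) - 1) - 2))
    (φ : Matrix (Fin d × Fin d) (Fin d × Fin d) ℂ →ₗ[ℂ]
      Matrix (Fin d × Fin d) (Fin d × Fin d) ℂ)
    (hφ : ∀ a, φ a = (lam : ℂ) •
        (a.trace • (1 : Matrix (Fin d × Fin d) (Fin d × Fin d) ℂ) - F0 d * a * F0 d)
      - F0 d * a * F0 d) :
    (∀ p q : Matrix (Fin d) (Fin d) ℂ, IsRankOneProj p → IsRankOneProj q →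
      (φ (p ⊗ₖ q)).PosSemidef)
    ∧
    (∀ σ : Matrix (Fin d × Fin d) (Fin d × Fin d) ℂ,
      σ.PosSemidef → SeparablePair σ → (φ σ).PosSemidef)
    ∧
    (∃ a : Matrix (Fin d × Fin d) (Fin d × Fin d) ℂ,
      a.PosSemidef ∧ ¬ (φ a).PosSemidef) := by
  have hd' : (3 : ℝ) ≤ d := by exact_mod_cast hd
  have hprod : ∀ u v : Fin d → ℂ,
      (φ (vecMulVec u (star u) ⊗ₖ vecMulVec v (star v))).PosSemidef := fun u v => by
    rw [hφ, star_vecMulVec_kronecker_star_vecMulVec]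
    exact posSemidef_phiLam_vecMulVec_product hd.le
      ((div_le_iff₀ (by nlinarith)).1 hlam1) u v
  have hkron {p q : Matrix (Fin d) (Fin d) ℂ} (hp : p.PosSemidef) (hq : q.PosSemidef) :
      (φ (p ⊗ₖ q)).PosSemidef :=
    posSemidef_map_kronecker φ hprod hp hq
  refine ⟨fun p q hp hq => hkron hp.posSemidef hq.posSemidef, ?_, ?_⟩
  · rintro σ - ⟨m, σ₁, σ₂, h₁, h₂, rfl⟩
    rw [map_sum]
    exact posSemidef_sum _ fun t _ => hkron (h₁ t) (h₂ t)
  · have : Nontrivial (Fin d) := Fin.nontrivial_iff_two_le.2 hd.le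
    obtain ⟨w, hw, hswap⟩ := exists_comp_swap_eq_neg (R := ℂ) (m := Fin d)
    refine ⟨vecMulVec w (star w), posSemidef_vecMulVec_self_star w, ?_⟩
    rw [hφ]
    exact not_posSemidef_phiLam_vecMulVec_of_comp_swap_eq_neg hd.le
      ((lt_div_iff₀ (by nlinarith)).1 hlam2) hw hswap
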